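/- arXiv:2605.15634 — 9 statements merged into one kernel-verified Lean document; each statement's English description precedes it below -/
import Mathlib

section
/- Let $m>0$. There exists a constant $C>0$ (depending only on $m$) such that for every nonnegative function $f:\mathbb{R}\to\mathbb{R}$ which is integrable and differentiable with derivative $f'$ square-integrable, one has $f\in L^{m+1}(\mathbb{R})$ and $\|f\|_{L^{m+1}}^{3(m+1)/m}\le C\,\|f\|_{L^1}^{(m+3)/m}\,\|f'\|_{L^2}^2$. -/
/-!
Since `f` is integrable it is small somewhere far to the left, so the fundamental theorem of
calculus applied to `f ^ (3/2)`, whose derivative is `(3/2) √f f'`, together with Cauchy–Schwarz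
gives the pointwise bound `f x ^ 3 ≤ (9/4) ‖f‖₁ ‖f'‖₂²`. Writing `f ^ (m+1) ≤ (sup f) ^ m f` and
integrating then yields the inequality with `C = 9/4`.
-/

open MeasureTheory Filter Topology Set

theorem integral_mul_le_sqrt_mul_sqrt {α : Type*} [MeasurableSpace α] {μ : Measure α}
    {g h : α → ℝ} (hg0 : 0 ≤ᵐ[μ] g) (hh0 : 0 ≤ᵐ[μ] h) (hg : MemLp g 2 μ) (hh : MemLp h 2 μ) :
    ∫ a, g a * h a ∂μ ≤ √(∫ a, g a ^ 2 ∂μ) * √(∫ a, h a ^ 2 ∂μ) := by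
  have := integral_mul_le_Lp_mul_Lq_of_nonneg Real.HolderConjugate.two_two hg0 hh0
    (by simpa using hg) (by simpa using hh)
  simpa only [Real.rpow_two, Real.sqrt_eq_rpow] using this

theorem MeasureTheory.Integrable.mapClusterPt_zero_atBot {E : Type*} [NormedAddCommGroup E]
    {f : ℝ → E} (hf : Integrable f) : MapClusterPt 0 atBot f := by
  refine Metric.nhds_basis_ball.mapClusterPt_iff_frequently.2 fun ε hε => ?_
  by_contra hfar
  obtain ⟨b, hb⟩ := eventually_atBot.1 (not_frequently.1 hfar)
  have hsub : Iic b ⊆ {a | ε ≤ ‖f a‖} := fun a ha => by simpa using hb a ha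
  have := (measure_mono hsub).trans_lt (hf.measure_norm_ge_lt_top hε)
  simp at this

theorem le_integral_abs_of_hasDerivAt_of_mapClusterPt {F F' : ℝ → ℝ}
    (hF : ∀ x, HasDerivAt F (F' x) x) (hF' : Integrable F') (hF0 : MapClusterPt 0 atBot F)
    (x : ℝ) : F x ≤ ∫ y, |F' y| := by
  refine le_of_forall_pos_le_add fun ε hε => ?_
  obtain ⟨a, hFa, hax⟩ := ((hF0.frequently (gt_mem_nhds hε)).and_eventually
    (eventually_lt_atBot x)).exists
  have hftc : ∫ y in a..x, F' y = F x - F a :=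
    intervalIntegral.integral_eq_sub_of_hasDerivAt (fun y _ => hF y) hF'.intervalIntegrable
  have hbound : ∫ y in a..x, F' y ≤ ∫ y, |F' y| := by
    rw [intervalIntegral.integral_of_le hax.le]
    exact (setIntegral_mono hF'.integrableOn hF'.abs.integrableOn fun y => le_abs_self _).trans
      (setIntegral_le_integral hF'.abs (.of_forall fun y => abs_nonneg _))
  linarith

theorem memLp_two_sqrt_of_integrable {α : Type*} [MeasurableSpace α] {μ : Measure α}
    {f : α → ℝ} (hf0 : ∀ x, 0 ≤ f x) (hf : Integrable f μ) : MemLp (fun x => √(f x)) 2 μ := by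
  refine (memLp_two_iff_integrable_sq
    (Real.continuous_sqrt.comp_aestronglyMeasurable hf.aestronglyMeasurable)).2 ?_
  simpa only [Real.sq_sqrt (hf0 _)] using hf

theorem rpow_three_halves_le_integral_sqrt_mul_abs_deriv {f : ℝ → ℝ} (hf0 : ∀ x, 0 ≤ f x)
    (hf : Integrable f) (hdf : Differentiable ℝ f) (hf' : Integrable fun x => deriv f x ^ 2)
    (x : ℝ) : f x ^ (3 / 2 : ℝ) ≤ 3 / 2 * ∫ y, √(f y) * |deriv f y| := by
  have hderiv : ∀ y, HasDerivAt (fun y => f y ^ (3 / 2 : ℝ)) (3 / 2 * √(f y) * deriv f y) y := by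
    intro y
    convert (hdf y).hasDerivAt.rpow_const (p := 3 / 2) (Or.inr (by norm_num)) using 1
    rw [Real.sqrt_eq_rpow]; norm_num; ring
  have hint : Integrable fun y => 3 / 2 * √(f y) * deriv f y := by
    have hdf2 : MemLp (deriv f) 2 :=
      (memLp_two_iff_integrable_sq (measurable_deriv f).aestronglyMeasurable).2 hf'
    simpa only [mul_assoc, Pi.mul_apply] using
      ((memLp_two_sqrt_of_integrable hf0 hf).integrable_mul hdf2).const_mul (3 / 2)
  have hzero : MapClusterPt 0 atBot fun y => f y ^ (3 / 2 : ℝ) := by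
    have hcont : ContinuousAt (fun t : ℝ => t ^ (3 / 2 : ℝ)) 0 :=
      Real.continuousAt_rpow_const _ _ (Or.inr (by norm_num))
    simpa [Function.comp_def] using hf.mapClusterPt_zero_atBot.continuousAt_comp hcont
  calc f x ^ (3 / 2 : ℝ) ≤ ∫ y, |3 / 2 * √(f y) * deriv f y| :=
        le_integral_abs_of_hasDerivAt_of_mapClusterPt hderiv hint hzero x
    _ = 3 / 2 * ∫ y, √(f y) * |deriv f y| := by
        rw [← integral_const_mul]
        simp only [abs_mul, abs_of_nonneg (Real.sqrt_nonneg _), mul_assoc]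
        norm_num

theorem pow_three_le_integral_mul_integral_deriv_sq {f : ℝ → ℝ} (hf0 : ∀ x, 0 ≤ f x)
    (hf : Integrable f) (hdf : Differentiable ℝ f) (hf' : Integrable fun x => deriv f x ^ 2)
    (x : ℝ) : f x ^ 3 ≤ 9 / 4 * (∫ y, f y) * ∫ y, deriv f y ^ 2 := by
  have hCS : ∫ y, √(f y) * |deriv f y| ≤ √(∫ y, f y) * √(∫ y, deriv f y ^ 2) := by
    have hdf2 : MemLp (fun y => |deriv f y|) 2 :=
      ((memLp_two_iff_integrable_sq (measurable_deriv f).aestronglyMeasurable).2 hf').abs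
    simpa only [Real.sq_sqrt (hf0 _), sq_abs] using
      integral_mul_le_sqrt_mul_sqrt (.of_forall fun y => Real.sqrt_nonneg _)
        (.of_forall fun y => abs_nonneg _) (memLp_two_sqrt_of_integrable hf0 hf) hdf2
  have hsup := rpow_three_halves_le_integral_sqrt_mul_abs_deriv hf0 hf hdf hf' x
  have hcube : f x ^ 3 = (f x ^ (3 / 2 : ℝ)) ^ 2 := by
    rw [← Real.rpow_natCast, ← Real.rpow_natCast, ← Real.rpow_mul (hf0 x)]; norm_num
  calc f x ^ 3 = (f x ^ (3 / 2 : ℝ)) ^ 2 := hcube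
    _ ≤ (3 / 2 * (√(∫ y, f y) * √(∫ y, deriv f y ^ 2))) ^ 2 := by
        gcongr
        · exact Real.rpow_nonneg (hf0 x) _
        · exact hsup.trans (by gcongr)
    _ = 9 / 4 * (∫ y, f y) * ∫ y, deriv f y ^ 2 := by
        rw [mul_pow, mul_pow, Real.sq_sqrt (integral_nonneg hf0),
          Real.sq_sqrt (integral_nonneg fun y => sq_nonneg _)]
        ring

section Interpolation

variable {α : Type*} {f : α → ℝ} {M p : ℝ}

theorem rpow_add_one_le_of_le (hf0 : ∀ x, 0 ≤ f x) (hfM : ∀ x, f x ≤ M) (hp : 0 ≤ p) (x : α) :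
    f x ^ (p + 1) ≤ M ^ p * f x := by
  rw [Real.rpow_add' (hf0 x) (by positivity), Real.rpow_one]
  exact mul_le_mul_of_nonneg_right (Real.rpow_le_rpow (hf0 x) (hfM x) hp) (hf0 x)

variable [MeasurableSpace α] {μ : Measure α}

theorem integrable_rpow_add_one_of_le (hf0 : ∀ x, 0 ≤ f x) (hf : Integrable f μ)
    (hfM : ∀ x, f x ≤ M) (hp : 0 ≤ p) : Integrable (fun x => f x ^ (p + 1)) μ := by
  refine (hf.const_mul (M ^ p)).mono'
    ((Real.continuous_rpow_const (by positivity)).comp_aestronglyMeasurable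
      hf.aestronglyMeasurable) (.of_forall fun x => ?_)
  rw [Real.norm_of_nonneg (Real.rpow_nonneg (hf0 x) _)]
  exact rpow_add_one_le_of_le hf0 hfM hp x

theorem integral_rpow_add_one_le_of_le (hf0 : ∀ x, 0 ≤ f x) (hf : Integrable f μ)
    (hfM : ∀ x, f x ≤ M) (hp : 0 ≤ p) : ∫ x, f x ^ (p + 1) ∂μ ≤ M ^ p * ∫ x, f x ∂μ := by
  rw [← integral_const_mul]
  exact integral_mono (integrable_rpow_add_one_of_le hf0 hf hfM hp) (hf.const_mul _)
    (rpow_add_one_le_of_le hf0 hfM hp)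

end Interpolation

/-- Sz.-Nagy (Gagliardo–Nirenberg type) interpolation inequality in one dimension:
for `m > 0` there is a constant `C > 0` depending only on `m` such that every
nonnegative integrable differentiable `f : ℝ → ℝ` with square-integrable derivative
lies in `L^{m+1}(ℝ)` and satisfies
`‖f‖_{m+1}^{3(m+1)/m} ≤ C ‖f‖_1^{(m+3)/m} ‖f'‖_2^2`. -/
theorem sz_nagy_inequality (m : ℝ) (hm : 0 < m) :
    ∃ C : ℝ, 0 < C ∧ ∀ f : ℝ → ℝ, (∀ x, 0 ≤ f x) → Integrable f →
      Differentiable ℝ f → Integrable (fun x => (deriv f x) ^ 2) →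
      Integrable (fun x => f x ^ (m + 1)) ∧
      (∫ x, f x ^ (m + 1)) ^ (3 / m) ≤
        C * (∫ x, f x) ^ ((m + 3) / m) * ∫ x, (deriv f x) ^ 2 := by
  refine ⟨9 / 4, by norm_num, fun f hf0 hf hdf hf' => ?_⟩
  set I := ∫ x, f x
  set J := ∫ x, deriv f x ^ 2
  have hI : 0 ≤ I := integral_nonneg hf0
  have hJ : 0 ≤ J := integral_nonneg fun x => sq_nonneg (deriv f x)
  set M := (9 / 4 * I * J) ^ (3⁻¹ : ℝ)
  have hM3 : M ^ 3 = 9 / 4 * I * J := by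
    exact_mod_cast Real.rpow_inv_natCast_pow (by positivity : 0 ≤ 9 / 4 * I * J) three_ne_zero
  have hfM : ∀ x, f x ≤ M := fun x =>
    calc f x = (f x ^ 3) ^ (3⁻¹ : ℝ) := by
          exact_mod_cast (Real.pow_rpow_inv_natCast (hf0 x) three_ne_zero).symm
      _ ≤ M := Real.rpow_le_rpow (by positivity [hf0 x])
          (pow_three_le_integral_mul_integral_deriv_sq hf0 hf hdf hf' x) (by norm_num)
  refine ⟨integrable_rpow_add_one_of_le hf0 hf hfM hm.le, ?_⟩
  have hM : 0 ≤ M := by positivity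
  calc (∫ x, f x ^ (m + 1)) ^ (3 / m) ≤ (M ^ m * I) ^ (3 / m) :=
        Real.rpow_le_rpow (integral_nonneg fun x => by positivity [hf0 x])
          (integral_rpow_add_one_le_of_le hf0 hf hfM hm.le) (by positivity)
    _ = M ^ 3 * I ^ (3 / m) := by
        rw [Real.mul_rpow (by positivity) hI, ← Real.rpow_mul hM, mul_div_cancel₀ _ hm.ne']
        norm_cast
    _ = 9 / 4 * I ^ ((m + 3) / m) * J := by
        rw [hM3, add_div, div_self hm.ne',
          Real.rpow_add' hI (by positivity), Real.rpow_one]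
        ring
end

section
/- For every nonnegative function $f:\mathbb{R}\to\mathbb{R}$ which is integrable and differentiable with derivative $f'$ square-integrable, one has $\int_{\mathbb{R}} f^4\,dx \le \frac{9}{4\pi^2}\left(\int_{\mathbb{R}} f\,dx\right)^2\int_{\mathbb{R}} (f')^2\,dx$. -/
/-!
Write `B = ∫ f`, `F x = ∫_{-∞}^x f`, and for `ε > 0` put `c = π / (B + 2ε)`. Then `c (F + ε)`
stays in `[cε, π - cε]`, so `φ = cot (c (F + ε))` is bounded and solves the Riccati equation
`φ' = -c f (1 + φ²)`. For `G = f³ φ` this gives the completed square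
`9/4 f'² - c² f⁴ - c G' = (3/2 f' - c f² φ)² ≥ 0`, and `∫ G' = 0` because `G` and `G'` are
integrable; hence `c² ∫ f⁴ ≤ 9/4 ∫ f'²`, and `ε → 0` gives the constant `9 / (4π²)`.
Integrability of `f⁴` comes from the uniform bound `f ≤ ∫ f + (∫ f'² + 1) / 2`, obtained by
integrating `f' ≤ (f'² + 1) / 2` over unit intervals.
-/

open MeasureTheory Set Filter Topology Real

lemma abs_le_sq_add_one_div_two (t : ℝ) : |t| ≤ (t ^ 2 + 1) / 2 := by
  nlinarith [sq_nonneg (|t| - 1), sq_abs t]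

lemma Real.sin_le_sin_of_mem_Icc {δ x : ℝ} (hδ : 0 ≤ δ) (hx : x ∈ Icc δ (π - δ)) :
    sin δ ≤ sin x := by
  have hδπ : δ ≤ π - δ := hx.1.trans hx.2
  have := strictConcaveOn_sin_Icc.concaveOn.ge_on_segment (x := δ) (y := π - δ)
    ⟨hδ, by linarith⟩ ⟨by linarith, by linarith⟩ (by rwa [segment_eq_Icc hδπ])
  simpa [sin_pi_sub] using this

lemma Real.hasDerivAt_cot {x : ℝ} (hx : sin x ≠ 0) : HasDerivAt cot (-(1 + cot x ^ 2)) x := by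
  have h := (hasDerivAt_cos x).div (hasDerivAt_sin x) hx
  rw [show cot = cos / sin from funext cot_eq_cos_div_sin]
  refine h.congr_deriv ?_
  rw [Pi.div_apply]
  field_simp
  ring

lemma hasDerivAt_integral_Iic {f : ℝ → ℝ} (hf : Integrable f) (hcont : Continuous f) (x : ℝ) :
    HasDerivAt (fun y => ∫ t in Iic y, f t) (f x) x := by
  have hsplit : (fun y => ∫ t in Iic y, f t) =
      fun y => (∫ t in Iic 0, f t) + ∫ t in 0..y, f t := by
    ext y
    rw [← intervalIntegral.integral_Iic_sub_Iic hf.integrableOn hf.integrableOn]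
    ring
  rw [hsplit]
  exact (hcont.integral_hasStrictDerivAt 0 x).hasDerivAt.const_add _

section

variable {f : ℝ → ℝ}

lemma intervalIntegrable_deriv_of_integrable_sq (hL2 : Integrable fun x => deriv f x ^ 2)
    (a b : ℝ) : IntervalIntegrable (deriv f) volume a b :=
  (((memLp_two_iff_integrable_sq (measurable_deriv f).aestronglyMeasurable).mpr hL2
    |>.locallyIntegrable one_le_two).integrableOn_isCompact isCompact_uIcc).intervalIntegrable

lemma sub_le_of_integrable_deriv_sq (hdiff : Differentiable ℝ f)
    (hL2 : Integrable fun x => deriv f x ^ 2) {x y : ℝ} (hxy : y ≤ x) :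
    f x - f y ≤ ((∫ t, deriv f t ^ 2) + (x - y)) / 2 := by
  have hsq := hL2.intervalIntegrable (a := y) (b := x)
  calc f x - f y = ∫ t in y..x, deriv f t :=
        (intervalIntegral.integral_deriv_eq_sub (fun t _ => hdiff t)
          (intervalIntegrable_deriv_of_integrable_sq hL2 y x)).symm
    _ ≤ ∫ t in y..x, (deriv f t ^ 2 + 1) / 2 :=
        intervalIntegral.integral_mono_on hxy (intervalIntegrable_deriv_of_integrable_sq hL2 y x)
          ((hsq.add intervalIntegrable_const).div_const 2)
          fun t _ => (le_abs_self _).trans (abs_le_sq_add_one_div_two _)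
    _ = ((∫ t in y..x, deriv f t ^ 2) + (x - y)) / 2 := by
        rw [intervalIntegral.integral_div,
          intervalIntegral.integral_add hsq intervalIntegrable_const,
          intervalIntegral.integral_const, smul_eq_mul, mul_one]
    _ ≤ ((∫ t, deriv f t ^ 2) + (x - y)) / 2 := by
        gcongr
        rw [intervalIntegral.integral_of_le hxy]
        exact setIntegral_le_integral hL2 (Eventually.of_forall fun t => sq_nonneg _)

lemma le_integral_add_of_integrable_deriv_sq (hf : ∀ x, 0 ≤ f x) (hint : Integrable f)
    (hdiff : Differentiable ℝ f) (hL2 : Integrable fun x => deriv f x ^ 2) (x : ℝ) :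
    f x ≤ (∫ t, f t) + ((∫ t, deriv f t ^ 2) + 1) / 2 := by
  have hlow : ∀ y ∈ Icc (x - 1) x, f x - ((∫ t, deriv f t ^ 2) + 1) / 2 ≤ f y := fun y hy => by
    have := sub_le_of_integrable_deriv_sq hdiff hL2 hy.2
    have : x - y ≤ 1 := by linarith [hy.1]
    linarith
  have hmono : f x - ((∫ t, deriv f t ^ 2) + 1) / 2 ≤ ∫ y in x - 1..x, f y := by
    simpa using intervalIntegral.integral_mono_on (by linarith) intervalIntegrable_const
      hint.intervalIntegrable hlow
  have hsub : ∫ y in x - 1..x, f y ≤ ∫ t, f t := by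
    rw [intervalIntegral.integral_of_le (by linarith)]
    exact setIntegral_le_integral hint (Eventually.of_forall hf)
  linarith

lemma integrable_pow_four_of_integrable_deriv_sq (hf : ∀ x, 0 ≤ f x) (hint : Integrable f)
    (hdiff : Differentiable ℝ f) (hL2 : Integrable fun x => deriv f x ^ 2) :
    Integrable fun x => f x ^ 4 := by
  set M := (∫ t, f t) + ((∫ t, deriv f t ^ 2) + 1) / 2
  have h := hint.bdd_mul (f := fun x => f x ^ 3) (c := M ^ 3)
    (hdiff.continuous.pow 3).aestronglyMeasurable
    (Eventually.of_forall fun x => by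
      rw [norm_pow, Real.norm_of_nonneg (hf x)]
      exact pow_le_pow_left₀ (hf x) (le_integral_add_of_integrable_deriv_sq hf hint hdiff hL2 x) 3)
  simpa only [← pow_succ] using h

end

lemma pow_three_le_add_pow_four {t : ℝ} (ht : 0 ≤ t) : t ^ 3 ≤ t + t ^ 4 := by
  nlinarith [sq_nonneg (t ^ 2 - t), sq_nonneg (t - 1), mul_nonneg ht (sq_nonneg (t - 1))]

lemma Real.abs_cot_le_inv {x s : ℝ} (hs : 0 < s) (hsin : s ≤ sin x) : |cot x| ≤ s⁻¹ := by
  rw [cot_eq_cos_div_sin, abs_div, abs_of_pos (hs.trans_le hsin), div_eq_mul_inv]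
  exact (mul_le_of_le_one_left (inv_pos.2 (hs.trans_le hsin)).le (abs_cos_le_one x)).trans
    (inv_anti₀ hs hsin)

lemma sq_mul_integral_pow_four_le {f u : ℝ → ℝ} {c s : ℝ} (hs : 0 < s)
    (hsin : ∀ x, s ≤ sin (u x)) (hu : ∀ x, HasDerivAt u (c * f x) x)
    (hdiff : Differentiable ℝ f) (hint : Integrable f) (hf4 : Integrable fun x => f x ^ 4)
    (hL2 : Integrable fun x => deriv f x ^ 2) :
    c ^ 2 * ∫ x, f x ^ 4 ≤ 9 / 4 * ∫ x, deriv f x ^ 2 := by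
  set φ := fun x => cot (u x)
  have hφ_bound : ∀ x, ‖φ x‖ ≤ s⁻¹ := fun x => abs_cot_le_inv hs (hsin x)
  have hφ_deriv : ∀ x, HasDerivAt φ (-(c * f x) * (1 + φ x ^ 2)) x := fun x =>
    ((hasDerivAt_cot (hs.trans_le (hsin x)).ne').comp x (hu x)).congr_deriv (by ring)
  have hφ_cont : Continuous φ := continuous_iff_continuousAt.2 fun x => (hφ_deriv x).continuousAt
  have hf_cont := hdiff.continuous
  set E := fun x => deriv f x * f x ^ 2 * (3 * φ x) - c * (f x ^ 4 * (1 + φ x ^ 2))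
  have hG_deriv : ∀ x, HasDerivAt (fun x => f x ^ 3 * φ x) (E x) x := fun x =>
    (((hdiff x).hasDerivAt.pow 3).mul (hφ_deriv x)).congr_deriv <| by
      simp only [E, Pi.pow_apply]
      push_cast
      ring
  have hG_int : Integrable fun x => f x ^ 3 * φ x := by
    refine ((hint.norm.add hf4).mul_const s⁻¹).mono'
      (Continuous.aestronglyMeasurable (by fun_prop)) (Eventually.of_forall fun x => ?_)
    have h4 : f x ^ 4 = ‖f x‖ ^ 4 := by
      rw [Real.norm_eq_abs, pow_abs, abs_of_nonneg (by positivity)]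
    simp only [Pi.add_apply, norm_mul, norm_pow, h4]
    exact mul_le_mul (pow_three_le_add_pow_four (norm_nonneg _)) (hφ_bound x) (norm_nonneg _)
      (by positivity)
  have hE_int : Integrable E := by
    have hderiv_memLp : MemLp (deriv f) 2 :=
      (memLp_two_iff_integrable_sq (measurable_deriv f).aestronglyMeasurable).2 hL2
    have hsq_memLp : MemLp (fun x => f x ^ 2) 2 :=
      (memLp_two_iff_integrable_sq (Continuous.aestronglyMeasurable (by fun_prop))).2
        (by simpa only [← pow_mul] using hf4)
    refine Integrable.sub ((hderiv_memLp.integrable_mul hsq_memLp).mul_bdd (c := 3 * s⁻¹)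
      (Continuous.aestronglyMeasurable (by fun_prop)) (Eventually.of_forall fun x => ?_))
      ((hf4.mul_bdd (c := 1 + s⁻¹ ^ 2) (Continuous.aestronglyMeasurable (by fun_prop))
      (Eventually.of_forall fun x => ?_)).const_mul c)
    · rw [norm_mul, Real.norm_ofNat]
      exact mul_le_mul_of_nonneg_left (hφ_bound x) (by norm_num)
    · rw [Real.norm_of_nonneg (by positivity), ← sq_abs]
      gcongr
      exact hφ_bound x
  have hE_zero : ∫ x, E x = 0 := integral_eq_zero_of_hasDerivAt_of_integrable hG_deriv hE_int hG_int
  have hsq : ∀ x, 9 / 4 * deriv f x ^ 2 - c ^ 2 * f x ^ 4 - c * E x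
      = (3 / 2 * deriv f x - c * f x ^ 2 * φ x) ^ 2 := fun x => by
    simp only [E]
    ring
  have hnonneg := integral_nonneg (μ := volume) fun x => (hsq x).symm ▸ sq_nonneg _
  have hdiff_int : Integrable fun x => 9 / 4 * deriv f x ^ 2 - c ^ 2 * f x ^ 4 :=
    (hL2.const_mul _).sub (hf4.const_mul _)
  rw [integral_sub hdiff_int (hE_int.const_mul c),
    integral_sub (hL2.const_mul _) (hf4.const_mul _), integral_const_mul, integral_const_mul,
    integral_const_mul, hE_zero] at hnonneg
  linarith

lemma pi_sq_mul_integral_pow_four_le {f : ℝ → ℝ} (hf : ∀ x, 0 ≤ f x) (hint : Integrable f)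
    (hdiff : Differentiable ℝ f) (hL2 : Integrable fun x => deriv f x ^ 2) {ε : ℝ} (hε : 0 < ε) :
    π ^ 2 * ∫ x, f x ^ 4 ≤ 9 / 4 * (∫ x, deriv f x ^ 2) * ((∫ x, f x) + 2 * ε) ^ 2 := by
  set B := ∫ x, f x
  have hB0 : 0 ≤ B := integral_nonneg hf
  have hB : 0 < B + 2 * ε := by linarith
  set c := π / (B + 2 * ε)
  have hc0 : 0 < c := div_pos pi_pos hB
  have hc : c * (B + 2 * ε) = π := div_mul_cancel₀ _ hB.ne'
  set F := fun x => ∫ t in Iic x, f t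
  have hF_mem : ∀ x, F x ∈ Icc 0 B := fun x =>
    ⟨setIntegral_nonneg measurableSet_Iic fun t _ => hf t,
      setIntegral_le_integral hint (Eventually.of_forall hf)⟩
  have hcε : 0 < c * ε := mul_pos hc0 hε
  have hsin_pos : 0 < sin (c * ε) := sin_pos_of_pos_of_lt_pi hcε (by nlinarith)
  have key := sq_mul_integral_pow_four_le (u := fun x => c * (F x + ε)) hsin_pos
    (fun x => sin_le_sin_of_mem_Icc hcε.le
      ⟨by nlinarith [(hF_mem x).1], by nlinarith [(hF_mem x).2]⟩)
    (fun x => ((hasDerivAt_integral_Iic hint hdiff.continuous x).add_const ε).const_mul c)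
    hdiff hint (integrable_pow_four_of_integrable_deriv_sq hf hint hdiff hL2) hL2
  calc π ^ 2 * ∫ x, f x ^ 4 = c ^ 2 * (∫ x, f x ^ 4) * (B + 2 * ε) ^ 2 := by
        rw [← hc]; ring
    _ ≤ 9 / 4 * (∫ x, deriv f x ^ 2) * (B + 2 * ε) ^ 2 := by gcongr

/-- The Sz.-Nagy inequality with the sharp constant `C_* = 9/(4π²)` in the case `m = 3`:
for every nonnegative integrable differentiable `f : ℝ → ℝ` with square-integrable
derivative, `∫ f⁴ ≤ (9/(4π²)) (∫ f)² ∫ (f')²`. -/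
theorem sz_nagy_inequality_m_eq_three (f : ℝ → ℝ) (hf : ∀ x, 0 ≤ f x)
    (hint : Integrable f) (hdiff : Differentiable ℝ f)
    (hL2 : Integrable (fun x => (deriv f x) ^ 2)) :
    Integrable (fun x => f x ^ 4) ∧
    ∫ x, f x ^ 4 ≤ (9 / (4 * Real.pi ^ 2)) * (∫ x, f x) ^ 2 * ∫ x, (deriv f x) ^ 2 := by
  refine ⟨integrable_pow_four_of_integrable_deriv_sq hf hint hdiff hL2, ?_⟩
  have hlim : Tendsto (fun ε => 9 / 4 * (∫ x, deriv f x ^ 2) * ((∫ x, f x) + 2 * ε) ^ 2)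
      (𝓝[>] 0) (𝓝 (9 / 4 * (∫ x, deriv f x ^ 2) * (∫ x, f x) ^ 2)) :=
    (Continuous.tendsto' (by fun_prop) 0 _ (by simp)).mono_left nhdsWithin_le_nhds
  have hlimit := ge_of_tendsto hlim (eventually_nhdsWithin_of_forall fun ε hε =>
    pi_sq_mul_integral_pow_four_le hf hint hdiff hL2 hε)
  rw [div_mul_eq_mul_div, div_mul_eq_mul_div, le_div_iff₀ (by positivity)]
  linarith
end

section
/- Let $m>0$, $\bar C\in\mathbb{R}$, and $a<b$ real numbers. Suppose $U:[a,b]\to\mathbb{R}$ is twice continuously differentiable, nonnegative, satisfies $U(a)=U(b)=0$, and solves $U''(x)+U(x)^m=\bar C$ for all $x\in[a,b]$. Then $\frac{1}{2}\big(b\,U'(b)^2 - a\,U'(a)^2\big) - \frac{1}{2}\int_a^b U'(x)^2\,dx - \frac{1}{m+1}\int_a^b U(x)^{m+1}\,dx = -\bar C\int_a^b U(x)\,dx$. -/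
/-!
The energy `E = U'²/2 + U^{m+1}/(m+1) - C̄ U` is a first integral of `U'' + U^m = C̄`:
`E' = U' (U'' + U^m - C̄) = 0`. Hence `(x E(x))' = E(x)`, so `∫ₐᵇ E = b E(b) - a E(a)`, and
`E = U'²/2` at the endpoints, where `U` vanishes.
-/

open Set intervalIntegral

theorem integral_eq_sub_of_hasDerivWithinAt_Icc {E : Type*} [NormedAddCommGroup E]
    [NormedSpace ℝ E] [CompleteSpace E] {f F : ℝ → E} {a b : ℝ} (hab : a ≤ b)
    (hF : ∀ x ∈ Icc a b, HasDerivWithinAt F (f x) (Icc a b) x)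
    (hf : ContinuousOn f (Icc a b)) :
    ∫ x in a..b, f x = F b - F a :=
  integral_eq_sub_of_hasDerivAt_of_le hab
    (fun x hx => (hF x hx).continuousWithinAt)
    (fun x hx => (hF x (Ioo_subset_Icc_self hx)).hasDerivAt (Icc_mem_nhds hx.1 hx.2))
    (hf.intervalIntegrable_of_Icc hab)

noncomputable def steadyStateEnergy (m C : ℝ) (U U' : ℝ → ℝ) (x : ℝ) : ℝ :=
  1 / 2 * U' x ^ 2 + 1 / (m + 1) * U x ^ (m + 1) - C * U x

section

variable {m C : ℝ} {U U' : ℝ → ℝ}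

theorem steadyStateEnergy_of_eq_zero (hm : m + 1 ≠ 0) {x : ℝ} (hx : U x = 0) :
    steadyStateEnergy m C U U' x = 1 / 2 * U' x ^ 2 := by
  simp [steadyStateEnergy, hx, Real.zero_rpow hm]

theorem hasDerivWithinAt_steadyStateEnergy (hm : 0 ≤ m) {U'' : ℝ → ℝ} {s : Set ℝ} {x : ℝ}
    (hU : HasDerivWithinAt U (U' x) s x) (hU' : HasDerivWithinAt U' (U'' x) s x) :
    HasDerivWithinAt (steadyStateEnergy m C U U') (U' x * (U'' x + U x ^ m - C)) s x := by
  have hpow := hU.rpow_const (p := m + 1) (Or.inr (by linarith))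
  refine (((hU'.pow 2).const_mul (1 / 2)).add (hpow.const_mul (1 / (m + 1))) |>.sub
    (hU.const_mul C)).congr_deriv ?_
  rw [add_sub_cancel_right]
  field_simp
  ring

theorem integral_steadyStateEnergy (hm : 0 ≤ m + 1) {a b : ℝ} (hab : a ≤ b)
    (hU : ContinuousOn U (Icc a b)) (hU' : ContinuousOn U' (Icc a b)) :
    ∫ x in a..b, steadyStateEnergy m C U U' x =
      1 / 2 * (∫ x in a..b, U' x ^ 2) + 1 / (m + 1) * (∫ x in a..b, U x ^ (m + 1))
        - C * ∫ x in a..b, U x := by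
  have hU'sq : IntervalIntegrable (fun x => U' x ^ 2) MeasureTheory.volume a b :=
    (hU'.pow 2).intervalIntegrable_of_Icc hab
  have hUpow := (hU.rpow_const (p := m + 1) fun _ _ => Or.inr hm)
    |>.intervalIntegrable_of_Icc (μ := MeasureTheory.volume) hab
  have hUint := hU.intervalIntegrable_of_Icc (μ := MeasureTheory.volume) hab
  simp only [steadyStateEnergy]
  rw [integral_sub ((hU'sq.const_mul _).add (hUpow.const_mul _)) (hUint.const_mul _),
    integral_add (hU'sq.const_mul _) (hUpow.const_mul _),
    integral_const_mul, integral_const_mul, integral_const_mul]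

end

theorem steady_state_x_multiplier_identity_general (m : ℝ) (hm : 0 < m) (Cbar a b : ℝ)
    (hab : a < b) (U U' U'' : ℝ → ℝ)
    (hU' : ∀ x ∈ Set.Icc a b, HasDerivWithinAt U (U' x) (Set.Icc a b) x)
    (hU'' : ∀ x ∈ Set.Icc a b, HasDerivWithinAt U' (U'' x) (Set.Icc a b) x)
    (ha : U a = 0) (hb : U b = 0)
    (heq : ∀ x ∈ Set.Icc a b, U'' x + U x ^ m = Cbar) :
    (1 / 2) * (b * (U' b) ^ 2 - a * (U' a) ^ 2)
        - (1 / 2) * (∫ x in a..b, (U' x) ^ 2)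
        - (1 / (m + 1)) * (∫ x in a..b, U x ^ (m + 1))
      = -Cbar * ∫ x in a..b, U x := by
  have hE : ∀ x ∈ Icc a b, HasDerivWithinAt (steadyStateEnergy m Cbar U U') 0 (Icc a b) x :=
    fun x hx => (hasDerivWithinAt_steadyStateEnergy hm.le (hU' x hx) (hU'' x hx)).congr_deriv
      (by rw [heq x hx, sub_self, mul_zero])
  have hxE : ∀ x ∈ Icc a b, HasDerivWithinAt (fun y => y * steadyStateEnergy m Cbar U U' y)
      (steadyStateEnergy m Cbar U U' x) (Icc a b) x :=
    fun x hx => ((hasDerivWithinAt_id x _).mul (hE x hx)).congr_deriv (by simp)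
  have hFTC := integral_eq_sub_of_hasDerivWithinAt_Icc hab.le hxE
    fun x hx => (hE x hx).continuousWithinAt
  have hm1 : 0 < m + 1 := by linarith
  rw [integral_steadyStateEnergy hm1.le hab.le (fun x hx => (hU' x hx).continuousWithinAt)
    (fun x hx => (hU'' x hx).continuousWithinAt), steadyStateEnergy_of_eq_zero hm1.ne' hb,
    steadyStateEnergy_of_eq_zero hm1.ne' ha] at hFTC
  linarith

/-- Multiplying the steady-state equation `U'' + U^m = C̄` by `x U'(x)` and integrating
over `[a,b]` (for a nonnegative `C²` function vanishing at the endpoints) yields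
`(1/2)(b U'(b)² - a U'(a)²) - (1/2)∫ₐᵇ U'² - (1/(m+1))∫ₐᵇ U^{m+1} = -C̄ ∫ₐᵇ U`. -/
theorem steady_state_x_multiplier_identity (m : ℝ) (hm : 0 < m) (Cbar a b : ℝ)
    (hab : a < b) (U U' U'' : ℝ → ℝ)
    (hU' : ∀ x ∈ Set.Icc a b, HasDerivWithinAt U (U' x) (Set.Icc a b) x)
    (hU'' : ∀ x ∈ Set.Icc a b, HasDerivWithinAt U' (U'' x) (Set.Icc a b) x)
    (hcont : ContinuousOn U'' (Set.Icc a b))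
    (hnn : ∀ x ∈ Set.Icc a b, 0 ≤ U x)
    (ha : U a = 0) (hb : U b = 0)
    (heq : ∀ x ∈ Set.Icc a b, U'' x + U x ^ m = Cbar) :
    (1 / 2) * (b * (U' b) ^ 2 - a * (U' a) ^ 2)
        - (1 / 2) * (∫ x in a..b, (U' x) ^ 2)
        - (1 / (m + 1)) * (∫ x in a..b, U x ^ (m + 1))
      = -Cbar * ∫ x in a..b, U x :=
  steady_state_x_multiplier_identity_general m hm Cbar a b hab U U' U'' hU' hU'' ha hb heq
end

section
/- Let $m>0$, $\bar C\in\mathbb{R}$ with $\bar C\neq 0$, and $a\in\mathbb{R}$. There is no twice continuously differentiable nonnegative function $U:(a,\infty)\to\mathbb{R}$ satisfying $U''(x)+U(x)^m=\bar C$ for all $x>a$ and $U(x)\to 0$ as $x\to\infty$. -/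
/-!
Since `U → 0` and `m > 0`, the equation forces `U'' → C̄ ≠ 0`. A function whose second derivative
has a nonzero limit grows at least quadratically towards `±∞`, so it cannot tend to a finite limit.
-/

open Filter Topology

theorem tendsto_atTop_of_eventually_le_deriv {f f' : ℝ → ℝ} {c : ℝ} (hc : 0 < c)
    (hf : ∀ᶠ x in atTop, HasDerivAt f (f' x) x) (hf' : ∀ᶠ x in atTop, c ≤ f' x) :
    Tendsto f atTop atTop := by
  obtain ⟨x₀, hx₀⟩ := (hf.and hf').exists_forall_of_atTop
  have hgrowth : ∀ x, x₀ ≤ x → c * (x - x₀) ≤ f x - f x₀ := by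
    refine fun x hx => (convex_Ici x₀).mul_sub_le_image_sub_of_le_deriv
      (fun y hy => (hx₀ y hy).1.continuousAt.continuousWithinAt) ?_ ?_ x₀ Set.self_mem_Ici x hx hx
    · rw [interior_Ici]
      exact fun y hy => (hx₀ y (le_of_lt hy)).1.differentiableAt.differentiableWithinAt
    · rw [interior_Ici]
      intro y hy
      obtain ⟨hderiv, hle⟩ := hx₀ y (le_of_lt hy)
      exact hderiv.deriv ▸ hle
  have hlinear : Tendsto (fun x => f x₀ + c * (x - x₀)) atTop atTop :=
    tendsto_atTop_add_const_left _ _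
      ((tendsto_atTop_add_const_right _ _ tendsto_id).const_mul_atTop hc)
  refine tendsto_atTop_mono' atTop ?_ hlinear
  filter_upwards [eventually_ge_atTop x₀] with x hx
  linarith [hgrowth x hx]

theorem tendsto_atTop_of_tendsto_deriv_deriv_pos {f f' f'' : ℝ → ℝ} {L : ℝ} (hL : 0 < L)
    (hf : ∀ᶠ x in atTop, HasDerivAt f (f' x) x) (hf' : ∀ᶠ x in atTop, HasDerivAt f' (f'' x) x)
    (hf'' : Tendsto f'' atTop (𝓝 L)) : Tendsto f atTop atTop :=
  have hderiv : Tendsto f' atTop atTop := tendsto_atTop_of_eventually_le_deriv (half_pos hL) hf'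
    (hf''.eventually (eventually_ge_nhds (half_lt_self hL)))
  tendsto_atTop_of_eventually_le_deriv one_pos hf (hderiv.eventually_ge_atTop 1)

theorem not_tendsto_nhds_of_tendsto_deriv_deriv {f f' f'' : ℝ → ℝ} {L b : ℝ} (hL : L ≠ 0)
    (hf : ∀ᶠ x in atTop, HasDerivAt f (f' x) x) (hf' : ∀ᶠ x in atTop, HasDerivAt f' (f'' x) x)
    (hf'' : Tendsto f'' atTop (𝓝 L)) : ¬ Tendsto f atTop (𝓝 b) := by
  intro hfb
  rcases hL.lt_or_gt with hneg | hpos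
  · have hdiv : Tendsto (-f) atTop atTop :=
      tendsto_atTop_of_tendsto_deriv_deriv_pos (neg_pos.mpr hneg)
        (hf.mono fun _ h => h.neg) (hf'.mono fun _ h => h.neg) hf''.neg
    exact not_tendsto_atTop_of_tendsto_nhds hfb.neg hdiv
  · exact not_tendsto_atTop_of_tendsto_nhds hfb
      (tendsto_atTop_of_tendsto_deriv_deriv_pos hpos hf hf' hf'')

/-- With a nonzero chemical potential constant `C̄`, there is no nonnegative `C²`
function `U` on `(a, ∞)` solving `U'' + U^m = C̄` there and tending to `0` at `+∞`. -/
theorem no_unbounded_steady_component (m : ℝ) (hm : 0 < m) (Cbar : ℝ)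
    (hCbar : Cbar ≠ 0) (a : ℝ) :
    ¬ ∃ U U' U'' : ℝ → ℝ,
      (∀ x ∈ Set.Ioi a, HasDerivAt U (U' x) x) ∧
      (∀ x ∈ Set.Ioi a, HasDerivAt U' (U'' x) x) ∧
      ContinuousOn U'' (Set.Ioi a) ∧
      (∀ x ∈ Set.Ioi a, 0 ≤ U x) ∧
      (∀ x ∈ Set.Ioi a, U'' x + U x ^ m = Cbar) ∧
      Filter.Tendsto U Filter.atTop (nhds 0) := by
  rintro ⟨U, U', U'', hU, hU', -, -, hsteady, hlim⟩
  have hpow : Tendsto (fun x => U x ^ m) atTop (𝓝 0) := by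
    simpa [Function.comp_def, Real.zero_rpow hm.ne'] using
      (Real.continuousAt_rpow_const 0 m (.inr hm.le)).tendsto.comp hlim
  have hU'' : Tendsto U'' atTop (𝓝 Cbar) := by
    have hdiff : Tendsto (fun x => Cbar - U x ^ m) atTop (𝓝 Cbar) := by
      simpa using tendsto_const_nhds.sub hpow
    refine hdiff.congr' ?_
    filter_upwards [eventually_gt_atTop a] with x hx
    linarith [hsteady x hx]
  exact not_tendsto_nhds_of_tendsto_deriv_deriv hCbar ((eventually_gt_atTop a).mono hU)
    ((eventually_gt_atTop a).mono hU') hU'' hlim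
end

section
/- Let $m>3$, $\alpha=\frac{m+3}{m}$, $C>0$, $M>0$, and set $P_*=\Big(\frac{\alpha+2}{2CM^{\alpha}}\Big)^{1/(m-\alpha-1)}$. Let $v:\mathbb{R}\to\mathbb{R}$ be nonnegative with $v\in L^1\cap L^{m+1}(\mathbb{R})$, differentiable with $v'\in L^2(\mathbb{R})$, such that $\|v\|_{L^1}=M$, $\|v\|_{L^{m+1}}=P_*$, and the Sz.-Nagy inequality $\|v\|_{L^{m+1}}^{\alpha+2}\le C\,\|v\|_{L^1}^{\alpha}\,\|v'\|_{L^2}^2$ holds. Then $F(v)\ge \frac{m-3}{3(m+1)}\,P_*^{m+1}$. -/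
open MeasureTheory

/-- In the supercritical regime `m > 3`, any nonnegative `v ∈ L¹ ∩ L^{m+1}(ℝ)` with
`v' ∈ L²(ℝ)`, mass `‖v‖₁ = M`, `‖v‖_{m+1} = P_*` and satisfying the Sz.-Nagy inequality
`‖v‖_{m+1}^{α+2} ≤ C ‖v‖₁^α ‖v'‖₂²` has free energy
`F(v) ≥ ((m-3)/(3(m+1))) P_*^{m+1}`. -/
theorem free_energy_lower_bound_on_constraint (m : ℝ) (hm : 3 < m) (C M α Ps : ℝ)
    (hC : 0 < C) (hM : 0 < M) (hα : α = (m + 3) / m)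
    (hPs : Ps = ((α + 2) / (2 * C * M ^ α)) ^ (1 / (m - α - 1)))
    (v : ℝ → ℝ) (hv : ∀ x, 0 ≤ v x) (hint : Integrable v)
    (hLm : Integrable (fun x => v x ^ (m + 1)))
    (hdiff : Differentiable ℝ v) (hL2 : Integrable (fun x => (deriv v x) ^ 2))
    (hmass : ∫ x, v x = M)
    (hnorm : (∫ x, v x ^ (m + 1)) ^ (1 / (m + 1)) = Ps)
    (hNagy : ((∫ x, v x ^ (m + 1)) ^ (1 / (m + 1))) ^ (α + 2)
        ≤ C * (∫ x, v x) ^ α * ∫ x, (deriv v x) ^ 2) :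
    (1 / 2) * (∫ x, (deriv v x) ^ 2) - (1 / (m + 1)) * (∫ x, v x ^ (m + 1))
      ≥ ((m - 3) / (3 * (m + 1))) * Ps ^ (m + 1) := by
  have hm0 : (0:ℝ) < m := by linarith
  have hm1 : (0:ℝ) < m + 1 := by linarith
  have hα2 : 0 < α + 2 := by rw [hα]; positivity
  have hMα : 0 < M ^ α := Real.rpow_pos_of_pos hM α
  have hB : 0 < (α + 2) / (2 * C * M ^ α) := by positivity
  have hexp : 0 < m - α - 1 := by
    have : m - α - 1 = (m - 3) * (m + 1) / m := by rw [hα]; field_simp; ring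
    rw [this]
    have h3 : (0:ℝ) < m - 3 := by linarith
    exact div_pos (mul_pos h3 (by linarith)) hm0
  have hPs0 : 0 < Ps := by rw [hPs]; exact Real.rpow_pos_of_pos hB _
  have hPow : Ps ^ (m - α - 1) = (α + 2) / (2 * C * M ^ α) := by
    rw [hPs, ← Real.rpow_mul hB.le, one_div, inv_mul_cancel₀ hexp.ne', Real.rpow_one]
  set Ip := ∫ x, v x ^ (m + 1) with hIp_def
  set I2 := ∫ x, (deriv v x) ^ 2 with hI2_def
  have hIp0 : 0 ≤ Ip :=
    integral_nonneg fun x => Real.rpow_nonneg (hv x) _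
  have hIp_eq : Ip = Ps ^ (m + 1) := by
    have : Ip = (Ip ^ (1 / (m + 1))) ^ (m + 1) := by
      rw [← Real.rpow_mul hIp0, one_div, inv_mul_cancel₀ hm1.ne', Real.rpow_one]
    rw [this, hnorm]
  rw [hnorm, hmass] at hNagy
  have hPsmono : 0 < Ps ^ (m - α - 1) := Real.rpow_pos_of_pos hPs0 _
  have h1 : Ps ^ (α + 2) * Ps ^ (m - α - 1) = Ps ^ (m + 1) := by
    rw [← Real.rpow_add hPs0]; ring_nf
  have h2 : Ps ^ (m + 1) ≤ (α + 2) / 2 * I2 := by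
    have hmul := mul_le_mul_of_nonneg_right hNagy hPsmono.le
    rw [h1, hPow] at hmul
    calc Ps ^ (m + 1) ≤ C * M ^ α * I2 * ((α + 2) / (2 * C * M ^ α)) := hmul
      _ = (α + 2) / 2 * I2 := by field_simp
  have h3 : 1 / (α + 2) * Ps ^ (m + 1) ≤ 1 / 2 * I2 := by
    rw [div_mul_eq_mul_div, div_le_iff₀ hα2] at *
    nlinarith [h2]
  have hfinal : 1 / (α + 2) - 1 / (m + 1) = (m - 3) / (3 * (m + 1)) := by
    rw [hα]
    field_simp
    ring
  have hPsm1 : 0 < Ps ^ (m + 1) := Real.rpow_pos_of_pos hPs0 _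
  rw [hIp_eq]
  have : ((m - 3) / (3 * (m + 1))) * Ps ^ (m + 1)
      = 1 / (α + 2) * Ps ^ (m + 1) - 1 / (m + 1) * Ps ^ (m + 1) := by
    rw [← hfinal]; ring
  rw [ge_iff_le, this]
  linarith
end

section
/- Let $m>3$, $\alpha=\frac{m+3}{m}$, $C>0$, $M>0$, and set $P_*=\Big(\frac{\alpha+2}{2CM^{\alpha}}\Big)^{1/(m-\alpha-1)}$. Let $w:\mathbb{R}\to\mathbb{R}$ be nonnegative with $w\in L^1\cap L^{m+1}(\mathbb{R})$, differentiable with $w'\in L^2(\mathbb{R})$, such that $\|w\|_{L^1}=M$, $\|w\|_{L^{m+1}}>0$, the Sz.-Nagy inequality $\|w\|_{L^{m+1}}^{\alpha+2}\le C\,M^{\alpha}\,\|w'\|_{L^2}^2$ holds, and $w$ satisfies the Pohozaev identity $\frac{m}{m+1}\|w\|_{L^{m+1}}^{m+1}=\frac{3}{2}\|w'\|_{L^2}^2$. Then $\|w\|_{L^{m+1}}\ge P_*$, and consequently $F(w)=\frac{m-3}{3(m+1)}\|w\|_{L^{m+1}}^{m+1}\ge \frac{m-3}{3(m+1)}P_*^{m+1}$.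 -/
open MeasureTheory

/-- In the supercritical regime `m > 3`, any nonnegative `w ∈ L¹ ∩ L^{m+1}(ℝ)` with
`w' ∈ L²(ℝ)`, mass `M`, positive `L^{m+1}`-norm, satisfying the Sz.-Nagy inequality
`‖w‖_{m+1}^{α+2} ≤ C M^α ‖w'‖₂²` and the Pohozaev identity
`(m/(m+1))‖w‖_{m+1}^{m+1} = (3/2)‖w'‖₂²` has `‖w‖_{m+1} ≥ P_*` and hence
`F(w) = ((m-3)/(3(m+1)))‖w‖_{m+1}^{m+1} ≥ ((m-3)/(3(m+1))) P_*^{m+1}`. -/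
theorem steady_state_energy_lower_bound (m : ℝ) (hm : 3 < m) (C M α Ps : ℝ)
    (hC : 0 < C) (hM : 0 < M) (hα : α = (m + 3) / m)
    (hPs : Ps = ((α + 2) / (2 * C * M ^ α)) ^ (1 / (m - α - 1)))
    (w : ℝ → ℝ) (hw : ∀ x, 0 ≤ w x) (hint : Integrable w)
    (hLm : Integrable (fun x => w x ^ (m + 1)))
    (hdiff : Differentiable ℝ w) (hL2 : Integrable (fun x => (deriv w x) ^ 2))
    (hmass : ∫ x, w x = M)
    (hpos : 0 < (∫ x, w x ^ (m + 1)) ^ (1 / (m + 1)))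
    (hNagy : ((∫ x, w x ^ (m + 1)) ^ (1 / (m + 1))) ^ (α + 2)
        ≤ C * M ^ α * ∫ x, (deriv w x) ^ 2)
    (hpoho : (m / (m + 1)) * (((∫ x, w x ^ (m + 1)) ^ (1 / (m + 1))) ^ (m + 1))
        = (3 / 2) * ∫ x, (deriv w x) ^ 2) :
    Ps ≤ (∫ x, w x ^ (m + 1)) ^ (1 / (m + 1)) ∧
    (1 / 2) * (∫ x, (deriv w x) ^ 2) - (1 / (m + 1)) * (∫ x, w x ^ (m + 1))
      = ((m - 3) / (3 * (m + 1))) * ((∫ x, w x ^ (m + 1)) ^ (1 / (m + 1))) ^ (m + 1) ∧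
    ((m - 3) / (3 * (m + 1))) * Ps ^ (m + 1)
      ≤ ((m - 3) / (3 * (m + 1))) * ((∫ x, w x ^ (m + 1)) ^ (1 / (m + 1))) ^ (m + 1) := by
  have hm0 : (0:ℝ) < m := by linarith
  have hm1 : (0:ℝ) < m + 1 := by linarith
  set I := ∫ x, w x ^ (m + 1) with hIdef
  set J := ∫ x, (deriv w x) ^ 2 with hJdef
  set P := I ^ (1 / (m + 1)) with hPdef
  have hMα : 0 < M ^ α := Real.rpow_pos_of_pos hM α
  have hInn : 0 ≤ I := integral_nonneg fun x => Real.rpow_nonneg (hw x) _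
  have hPpow : P ^ (m + 1) = I := by
    rw [hPdef, ← Real.rpow_mul hInn, one_div_mul_cancel (ne_of_gt hm1), Real.rpow_one]
  have he : 0 < m - α - 1 := by
    have h1 : m - α - 1 = (m - 3) * (m + 1) / m := by
      subst hα; field_simp; ring
    rw [h1]; exact div_pos (by nlinarith) hm0
  have hPpos : 0 < P := hpos
  -- P^(m+1) = P^(α+2) * P^(m-α-1)
  have hsplit : P ^ (m + 1) = P ^ (α + 2) * P ^ (m - α - 1) := by
    rw [← Real.rpow_add hPpos]; ring_nf
  have hApos : 0 < P ^ (α + 2) := Real.rpow_pos_of_pos hPpos _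
  have hJval : J = 2 / 3 * (m / (m + 1) * P ^ (m + 1)) := by linarith
  have hK : 0 < 2 * C * M ^ α := by positivity
  have hα2 : α + 2 = 3 * (m + 1) / m := by subst hα; field_simp; ring
  have key : 1 ≤ C * M ^ α * (2 / 3 * (m / (m + 1))) * P ^ (m - α - 1) := by
    have h2 : P ^ (α + 2) ≤ C * M ^ α * (2 / 3 * (m / (m + 1))) * P ^ (m - α - 1) * P ^ (α + 2) := by
      calc P ^ (α + 2) ≤ C * M ^ α * J := hNagy
        _ = C * M ^ α * (2 / 3 * (m / (m + 1))) * P ^ (m - α - 1) * P ^ (α + 2) := by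
            rw [hJval, hsplit]; ring
    nlinarith [hApos]
  have hα2pos : 0 < α + 2 := by rw [hα2]; positivity
  have hbase : (α + 2) / (2 * C * M ^ α) ≤ P ^ (m - α - 1) := by
    rw [div_le_iff₀ hK]
    have hcoef : C * M ^ α * (2 / 3 * (m / (m + 1))) * (α + 2) = 2 * C * M ^ α := by
      rw [hα2]; field_simp
    calc α + 2 = (α + 2) * 1 := by ring
      _ ≤ (α + 2) * (C * M ^ α * (2 / 3 * (m / (m + 1))) * P ^ (m - α - 1)) :=
          mul_le_mul_of_nonneg_left key hα2pos.le
      _ = P ^ (m - α - 1) * (C * M ^ α * (2 / 3 * (m / (m + 1))) * (α + 2)) := by ring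
      _ = P ^ (m - α - 1) * (2 * C * M ^ α) := by rw [hcoef]
  have hPsle : Ps ≤ P := by
    have h3 : ((α + 2) / (2 * C * M ^ α)) ^ (1 / (m - α - 1))
        ≤ (P ^ (m - α - 1)) ^ (1 / (m - α - 1)) := by
      exact Real.rpow_le_rpow (le_of_lt (div_pos hα2pos hK)) hbase (by positivity)
    rwa [← Real.rpow_mul hPpos.le, mul_one_div_cancel (ne_of_gt he), Real.rpow_one, ← hPs] at h3
  refine ⟨hPsle, ?_, ?_⟩
  · rw [hJval, ← hPpow]
    field_simp
  · have hPsnn : 0 ≤ Ps := by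
      rw [hPs]
      have : 0 < α + 2 := by rw [hα2]; positivity
      positivity
    have := Real.rpow_le_rpow hPsnn hPsle (le_of_lt hm1)
    have hc : 0 ≤ (m - 3) / (3 * (m + 1)) := div_nonneg (by linarith) (by linarith)
    exact mul_le_mul_of_nonneg_left this hc
end

section
/- Let $u:\mathbb{R}\to\mathbb{R}$ be a nonnegative integrable function, differentiable with derivative $u'\in L^2(\mathbb{R})$ and $u\in L^4(\mathbb{R})$, satisfying $\int_{\mathbb{R}}u\,dx = \frac{2\sqrt{2}\,\pi}{3}$. Then $\frac{1}{2}\int_{\mathbb{R}}(u')^2\,dx - \frac{1}{4}\int_{\mathbb{R}}u^4\,dx \ge 0$. -/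
/-!
Let `M = sup u` and `g(s) = √(s - s⁴/M³)`, `Φ(t) = ∫₀ᵗ g`. Since `u` is integrable it takes
arbitrarily small values near `±∞`, so `Φ ∘ u` climbs from `0` to `Φ M` and back: its total
variation `∫ g(u) |u'|` is at least `2 Φ(M) = π M^{3/2} / 3`. Cauchy–Schwarz bounds the
total variation by `(∫ g(u)²)^{1/2} (∫ u'²)^{1/2}`, and `∫ g(u)² = ∫ u - M⁻³ ∫ u⁴`. At the
critical mass `(∫ u)² = 8π²/9` the resulting inequality rearranges, by AM–GM, to `∫ u⁴ ≤ 2 ∫ u'²`.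
The same total-variation bound with `Φ(t) = t²` shows that `u` is bounded.
-/

open MeasureTheory Filter Topology Set Real
open scoped ENNReal

namespace MeasureTheory

theorem Integrable.exists_norm_lt_of_measure_eq_top {α E : Type*} [MeasurableSpace α]
    [NormedAddCommGroup E] {μ : Measure α} {f : α → E} (hf : Integrable f μ) {s : Set α}
    (hs : MeasurableSet s) (hμs : μ s = ∞) {ε : ℝ} (hε : 0 < ε) : ∃ x ∈ s, ‖f x‖ < ε := by
  by_contra! h
  have hε_int : IntegrableOn (fun _ => ε) s μ :=
    hf.integrableOn.norm.mono' aestronglyMeasurable_const <|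
      ae_restrict_of_forall_mem hs fun x hx => by simpa [abs_of_pos hε] using h x hx
  simp [integrableOn_const_iff, hμs, hε.ne'] at hε_int

section

variable {E : Type*} [NormedAddCommGroup E] {f : ℝ → E}

theorem Integrable.mapClusterPt_zero_atTop (hf : Integrable f) : MapClusterPt 0 atTop f := by
  refine mapClusterPt_iff_frequently.2 fun s hs => frequently_atTop.2 fun a => ?_
  obtain ⟨ε, hε, hball⟩ := Metric.mem_nhds_iff.1 hs
  obtain ⟨x, hx, hfx⟩ := hf.exists_norm_lt_of_measure_eq_top measurableSet_Ici (by simp) hε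
  exact ⟨x, hx, hball (by simpa using hfx)⟩

theorem Integrable.mapClusterPt_zero_atBot_s13 (hf : Integrable f) : MapClusterPt 0 atBot f := by
  refine mapClusterPt_iff_frequently.2 fun s hs => frequently_atBot.2 fun a => ?_
  obtain ⟨ε, hε, hball⟩ := Metric.mem_nhds_iff.1 hs
  obtain ⟨x, hx, hfx⟩ := hf.exists_norm_lt_of_measure_eq_top measurableSet_Iic (by simp) hε
  exact ⟨x, hx, hball (by simpa using hfx)⟩

end

theorem memLp_two_of_integrable_of_integrable_pow_four {α : Type*} [MeasurableSpace α]
    {μ : Measure α} {u : α → ℝ} (hint : Integrable u μ)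
    (hL4 : Integrable (fun x => u x ^ 4) μ) : MemLp u 2 μ := by
  refine (memLp_two_iff_integrable_sq hint.aestronglyMeasurable).2 <|
    (hint.norm.add hL4).mono' (hint.aestronglyMeasurable.pow 2) (Eventually.of_forall fun x => ?_)
  have h4 : u x ^ 4 = |u x| ^ 4 := (Even.pow_abs ⟨2, rfl⟩ _).symm
  simp only [Pi.add_apply, norm_pow, Real.norm_eq_abs, h4]
  nlinarith [abs_nonneg (u x), sq_nonneg (|u x| ^ 2 - |u x|),
    mul_nonneg (abs_nonneg (u x)) (sq_nonneg (|u x| - 1))]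

theorem sq_integral_abs_mul_le {α : Type*} [MeasurableSpace α] {μ : Measure α} {f g : α → ℝ}
    (hf : MemLp f 2 μ) (hg : MemLp g 2 μ) :
    (∫ x, |f x * g x| ∂μ) ^ 2 ≤ (∫ x, f x ^ 2 ∂μ) * ∫ x, g x ^ 2 ∂μ := by
  have h := integral_mul_norm_le_Lp_mul_Lq Real.HolderConjugate.two_two
    (by simpa using hf) (by simpa using hg)
  simp only [Real.norm_eq_abs, Real.rpow_two, sq_abs, ← abs_mul, ← Real.sqrt_eq_rpow] at h
  calc (∫ x, |f x * g x| ∂μ) ^ 2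
      ≤ (√(∫ x, f x ^ 2 ∂μ) * √(∫ x, g x ^ 2 ∂μ)) ^ 2 :=
        pow_le_pow_left₀ (integral_nonneg fun x => abs_nonneg _) h 2
    _ = (∫ x, f x ^ 2 ∂μ) * ∫ x, g x ^ 2 ∂μ := by
        rw [mul_pow, Real.sq_sqrt (integral_nonneg fun x => sq_nonneg _),
          Real.sq_sqrt (integral_nonneg fun x => sq_nonneg _)]

end MeasureTheory

theorem two_mul_le_integral_abs_of_hasDerivAt {F w : ℝ → ℝ} (hF : ∀ x, HasDerivAt F (w x) x)
    (hw : Integrable w) (hbot : MapClusterPt 0 atBot F) (htop : MapClusterPt 0 atTop F)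
    (x : ℝ) : 2 * F x ≤ ∫ y, |w y| := by
  have hFTC (a b : ℝ) : ∫ y in a..b, w y = F b - F a :=
    intervalIntegral.integral_eq_sub_of_hasDerivAt (fun y _ => hF y) hw.intervalIntegrable
  have hvar {a b : ℝ} (ha : a ≤ x) (hb : x ≤ b) : 2 * F x ≤ (∫ y, |w y|) + F a + F b := by
    have hleft := intervalIntegral.abs_integral_le_integral_abs (f := w) (μ := volume) ha
    have hright := intervalIntegral.abs_integral_le_integral_abs (f := w) (μ := volume) hb
    have hsplit := intervalIntegral.integral_add_adjacent_intervals
      (hw.abs.intervalIntegrable (a := a) (b := x)) (hw.abs.intervalIntegrable (b := b))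
    have hle : ∫ y in a..b, |w y| ≤ ∫ y, |w y| := by
      rw [intervalIntegral.integral_of_le (ha.trans hb)]
      exact setIntegral_le_integral hw.abs (Eventually.of_forall fun y => abs_nonneg _)
    rw [hFTC] at hleft hright
    linarith [le_abs_self (F x - F a), neg_abs_le (F b - F x)]
  refine le_of_forall_pos_lt_add fun ε hε => ?_
  have hsmall : Iio (ε / 2) ∈ 𝓝 (0 : ℝ) := Iio_mem_nhds (half_pos hε)
  obtain ⟨a, hFa, ha⟩ :=
    ((mapClusterPt_iff_frequently.1 hbot _ hsmall).and_eventually (eventually_le_atBot x)).exists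
  obtain ⟨b, hFb, hb⟩ :=
    ((mapClusterPt_iff_frequently.1 htop _ hsmall).and_eventually (eventually_ge_atTop x)).exists
  linarith [hvar ha hb, mem_Iio.1 hFa, mem_Iio.1 hFb]

theorem two_mul_comp_le_integral_abs_mul_deriv {u Φ φ : ℝ → ℝ} (hu : Integrable u)
    (hdiff : Differentiable ℝ u) (hΦ : ∀ t, HasDerivAt Φ (φ t) t) (hΦ0 : Φ 0 = 0)
    (hw : Integrable fun x => φ (u x) * deriv u x) (x : ℝ) :
    2 * Φ (u x) ≤ ∫ y, |φ (u y) * deriv u y| := by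
  have hcont : ContinuousAt Φ 0 := (hΦ 0).continuousAt
  refine two_mul_le_integral_abs_of_hasDerivAt (F := Φ ∘ u)
    (fun y => (hΦ (u y)).comp y (hdiff y).hasDerivAt) hw ?_ ?_ x
  · simpa [hΦ0] using hu.mapClusterPt_zero_atBot_s13.continuousAt_comp hcont
  · simpa [hΦ0] using hu.mapClusterPt_zero_atTop.continuousAt_comp hcont

theorem bddAbove_range_of_memLp_two {u : ℝ → ℝ} (hint : Integrable u)
    (hdiff : Differentiable ℝ u) (hu : MemLp u 2) (hu' : MemLp (deriv u) 2) :
    BddAbove (range u) := by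
  set C := ∫ y, |2 * u y * deriv u y|
  have hsq (t : ℝ) : HasDerivAt (· ^ 2) (2 * t) t := by simpa using hasDerivAt_pow 2 t
  have hbound (x : ℝ) : 2 * u x ^ 2 ≤ C :=
    two_mul_comp_le_integral_abs_mul_deriv hint hdiff hsq (zero_pow two_ne_zero)
      ((hu.const_mul 2).integrable_mul hu') x
  refine ⟨√(C / 2), forall_mem_range.2 fun x => (le_abs_self _).trans (Real.abs_le_sqrt ?_)⟩
  linarith [hbound x]

theorem integral_sqrt_one_sub_sq_zero_one : ∫ x in (0 : ℝ)..1, √(1 - x ^ 2) = π / 4 := by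
  have hcont : Continuous fun x : ℝ => √(1 - x ^ 2) := by fun_prop
  have hsymm : ∫ x in (-1 : ℝ)..0, √(1 - x ^ 2) = ∫ x in (0 : ℝ)..1, √(1 - x ^ 2) := by
    have h := intervalIntegral.integral_comp_neg (a := 0) (b := 1) fun x => √(1 - x ^ 2)
    simp only [neg_sq, neg_zero] at h
    exact h.symm
  have hsplit := intervalIntegral.integral_add_adjacent_intervals
    (hcont.intervalIntegrable (μ := volume) (-1) 0) (hcont.intervalIntegrable 0 1)
  rw [hsymm, integral_sqrt_one_sub_sq] at hsplit
  linarith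

theorem integral_sqrt_sub_pow_four : ∫ t in (0 : ℝ)..1, √(t - t ^ 4) = π / 6 := by
  have hsubst := intervalIntegral.integral_comp_mul_deriv (a := 0) (b := 1)
    (f := fun t => t ^ (3 / 2 : ℝ)) (f' := fun t => 3 / 2 * t ^ (1 / 2 : ℝ))
    (g := fun x => √(1 - x ^ 2))
    (fun t _ => by
      convert Real.hasDerivAt_rpow_const (x := t) (p := 3 / 2) (Or.inr (by norm_num)) using 3
      norm_num)
    (continuous_const.mul (Real.continuous_rpow_const (by norm_num))).continuousOn
    (by fun_prop)
  norm_num only [Real.zero_rpow, Real.one_rpow] at hsubst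
  rw [integral_sqrt_one_sub_sq_zero_one] at hsubst
  have hintegrand : EqOn (fun t => √(t - t ^ 4))
      (fun t => 2 / 3 * (((fun x => √(1 - x ^ 2)) ∘ fun t => t ^ (3 / 2 : ℝ)) t *
        (3 / 2 * t ^ (1 / 2 : ℝ)))) (uIcc 0 1) := by
    intro t ht
    have ht0 : 0 ≤ t := (uIcc_of_le (zero_le_one (α := ℝ)) ▸ ht).1
    have hcube : (t ^ (3 / 2 : ℝ)) ^ 2 = t ^ 3 := by
      rw [← Real.rpow_mul_natCast ht0]; norm_num
    simp only [Function.comp, hcube, ← Real.sqrt_eq_rpow]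
    rw [show t - t ^ 4 = (1 - t ^ 3) * t by ring, Real.sqrt_mul' _ ht0]
    ring
  rw [intervalIntegral.integral_congr hintegrand, intervalIntegral.integral_const_mul, hsubst]
  ring

theorem integral_sqrt_sub_pow_four_div {M : ℝ} (hM : 0 < M) :
    ∫ s in (0 : ℝ)..M, √(s - s ^ 4 / M ^ 3) = M * √M * (π / 6) := by
  have hscale (t : ℝ) : √(M * t - (M * t) ^ 4 / M ^ 3) = √M * √(t - t ^ 4) := by
    rw [← Real.sqrt_mul hM.le]
    congr 1
    field_simp
  have h := intervalIntegral.smul_integral_comp_mul_left (a := 0) (b := 1)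
    (fun s => √(s - s ^ 4 / M ^ 3)) M
  simp only [hscale, mul_zero, mul_one, intervalIntegral.integral_const_mul,
    integral_sqrt_sub_pow_four, smul_eq_mul] at h
  rw [← h]
  ring

theorem pi_sq_div_nine_mul_cube_le {u : ℝ → ℝ} (hu : ∀ x, 0 ≤ u x) (hint : Integrable u)
    (hdiff : Differentiable ℝ u) (hu' : MemLp (deriv u) 2) (hL4 : Integrable fun x => u x ^ 4)
    {M : ℝ} (hM : IsLUB (range u) M) (hM0 : 0 < M) :
    π ^ 2 / 9 * M ^ 3 ≤ ((∫ x, u x) - (∫ x, u x ^ 4) / M ^ 3) * ∫ x, deriv u x ^ 2 := by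
  set g : ℝ → ℝ := fun s => √(s - s ^ 4 / M ^ 3)
  set Φ : ℝ → ℝ := fun t => ∫ s in (0 : ℝ)..t, g s
  set T := ∫ x, |g (u x) * deriv u x|
  have hg : Continuous g := by fun_prop
  have hΦ (t : ℝ) : HasDerivAt Φ (g t) t := (hg.integral_hasStrictDerivAt 0 t).hasDerivAt
  have hgu (x : ℝ) : g (u x) ^ 2 = u x - u x ^ 4 / M ^ 3 := by
    refine Real.sq_sqrt ?_
    have hcube : u x ^ 3 ≤ M ^ 3 := pow_le_pow_left₀ (hu x) (hM.1 (mem_range_self x)) 3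
    rw [sub_nonneg, div_le_iff₀ (by positivity)]
    nlinarith [mul_le_mul_of_nonneg_left hcube (hu x)]
  have hgu_int : Integrable fun x => g (u x) ^ 2 := by
    simp_rw [hgu]
    exact hint.sub (hL4.div_const _)
  have hgu_L2 : MemLp (fun x => g (u x)) 2 :=
    (memLp_two_iff_integrable_sq (hg.comp hdiff.continuous).aestronglyMeasurable).2 hgu_int
  have hTV (x : ℝ) : 2 * Φ (u x) ≤ T :=
    two_mul_comp_le_integral_abs_mul_deriv hint hdiff hΦ intervalIntegral.integral_same
      (hgu_L2.integrable_mul hu') x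
  have hΦM : 2 * Φ M ≤ T := by
    have hΦcont : Continuous Φ := continuous_iff_continuousAt.2 fun t => (hΦ t).continuousAt
    have hclosed : IsClosed {t | 2 * Φ t ≤ T} :=
      isClosed_le (continuous_const.mul hΦcont) continuous_const
    exact hclosed.closure_subset_iff.2 (range_subset_iff.2 hTV) (hM.mem_closure (range_nonempty u))
  have hCS := sq_integral_abs_mul_le hgu_L2 hu'
  rw [integral_congr_ae (Eventually.of_forall hgu), integral_sub hint (hL4.div_const _),
    integral_div] at hCS
  have hΦM_val : Φ M = M * √M * (π / 6) := integral_sqrt_sub_pow_four_div hM0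
  calc π ^ 2 / 9 * M ^ 3 = (2 * Φ M) ^ 2 := by
        rw [hΦM_val, mul_pow, mul_pow, mul_pow, Real.sq_sqrt hM0.le]; ring
    _ ≤ T ^ 2 := pow_le_pow_left₀ (by rw [hΦM_val]; positivity) hΦM 2
    _ ≤ _ := hCS

-- AM–GM in the form `(P/m) (I - P/m) ≤ I²/4 = 2c`.
theorem le_two_mul_of_mul_le_sub_div_mul {I P A m c : ℝ} (hm : 0 < m) (hc : 0 < c)
    (hA : 0 ≤ A) (hI : I ^ 2 = 8 * c) (h : c * m ≤ (I - P / m) * A) : P ≤ 2 * A := by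
  set y := P / m with hy
  have hP : P = y * m := by rw [hy]; field_simp
  rw [hP]
  nlinarith [sq_nonneg (I - 2 * y), mul_pos hc hm, mul_nonneg hA hm.le]

/-- At the critical mass `M_c = 2√2 π / 3` (for `m = 3`), the free energy
`F(u) = (1/2)∫ (u')² - (1/4)∫ u⁴` of any nonnegative integrable differentiable
function `u` with `u' ∈ L²`, `u ∈ L⁴` and `∫ u = M_c` is nonnegative. -/
theorem free_energy_nonneg_at_critical_mass (u : ℝ → ℝ) (hu : ∀ x, 0 ≤ u x)
    (hint : Integrable u) (hdiff : Differentiable ℝ u)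
    (hL2 : Integrable (fun x => (deriv u x) ^ 2))
    (hL4 : Integrable (fun x => u x ^ 4))
    (hmass : ∫ x, u x = 2 * Real.sqrt 2 * Real.pi / 3) :
    0 ≤ (1 / 2) * (∫ x, (deriv u x) ^ 2) - (1 / 4) * ∫ x, u x ^ 4 := by
  have hu'_L2 : MemLp (deriv u) 2 :=
    (memLp_two_iff_integrable_sq (measurable_deriv u).aestronglyMeasurable).2 hL2
  have hbdd : BddAbove (range u) := bddAbove_range_of_memLp_two hint hdiff
    (memLp_two_of_integrable_of_integrable_pow_four hint hL4) hu'_L2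
  obtain ⟨x, hx⟩ : ∃ x, 0 < u x := by
    by_contra! h
    have hzero : u = 0 := funext fun x => le_antisymm (h x) (hu x)
    have hpos : 0 < 2 * Real.sqrt 2 * Real.pi / 3 := by positivity
    simp [hzero] at hmass
    linarith
  have hM0 : 0 < sSup (range u) := hx.trans_le (le_csSup hbdd (mem_range_self x))
  have hkey := pi_sq_div_nine_mul_cube_le hu hint hdiff hu'_L2 hL4
    (isLUB_csSup (range_nonempty u) hbdd) hM0
  have hmass_sq : (∫ x, u x) ^ 2 = 8 * (π ^ 2 / 9) := by
    rw [hmass, div_pow, mul_pow, mul_pow, Real.sq_sqrt zero_le_two]; ring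
  have h4 := le_two_mul_of_mul_le_sub_div_mul (pow_pos hM0 3) (by positivity)
    (integral_nonneg fun x => sq_nonneg _) hmass_sq hkey
  linarith
end

section
/- Let $0<m<3$, $\alpha=\frac{m+3}{m}$, $C>0$, $M>0$, and set $P_*=\Big(\frac{\alpha+2}{2CM^{\alpha}}\Big)^{1/(m-\alpha-1)}$. Let $u:\mathbb{R}\to\mathbb{R}$ be nonnegative with $u\in L^1\cap L^{m+1}(\mathbb{R})$, differentiable with $u'\in L^2(\mathbb{R})$, such that $\|u\|_{L^1}=M$ and the Sz.-Nagy inequality $\|u\|_{L^{m+1}}^{\alpha+2}\le C\,M^{\alpha}\,\|u'\|_{L^2}^2$ holds. Then $F(u)\ge \frac{m-3}{3(m+1)}\,P_*^{m+1}$, and in particular this lower bound is negative. -/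
open MeasureTheory

/-- Young-type inequality: for `0 < p < q` and `t ≥ 0`,
`t^p/p ≤ t^q/q + (1/p - 1/q)`. -/
lemma young_aux {p q t : ℝ} (hp : 0 < p) (hpq : p < q) (ht : 0 ≤ t) :
    t ^ p / p ≤ t ^ q / q + (1 / p - 1 / q) := by
  have hq : 0 < q := hp.trans hpq
  have h := Real.geom_mean_le_arith_mean2_weighted (w₁ := p / q) (w₂ := 1 - p / q)
    (p₁ := t ^ q) (p₂ := 1) (by positivity)
    (by rw [sub_nonneg]; exact (div_le_one hq).2 hpq.le)
    (Real.rpow_nonneg ht q) zero_le_one (by ring)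
  rw [Real.one_rpow, mul_one, ← Real.rpow_mul ht, mul_one] at h
  have hqp : q * (p / q) = p := by field_simp
  rw [hqp] at h
  have key : t ^ p / p ≤ (p / q * t ^ q + (1 - p / q)) / p := by gcongr
  calc t ^ p / p ≤ (p / q * t ^ q + (1 - p / q)) / p := key
    _ = t ^ q / q + (1 / p - 1 / q) := by field_simp

/-- In the diffusion-dominated regime `0 < m < 3`, any nonnegative
`u ∈ L¹ ∩ L^{m+1}(ℝ)` with `u' ∈ L²(ℝ)`, mass `‖u‖₁ = M`, satisfying the Sz.-Nagy
inequality `‖u‖_{m+1}^{α+2} ≤ C M^α ‖u'‖₂²`, has free energy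
`F(u) ≥ ((m-3)/(3(m+1))) P_*^{m+1}`, and this lower bound is negative. -/
theorem free_energy_lower_bound_subcritical (m : ℝ) (hm0 : 0 < m) (hm3 : m < 3)
    (C M α Ps : ℝ) (hC : 0 < C) (hM : 0 < M) (hα : α = (m + 3) / m)
    (hPs : Ps = ((α + 2) / (2 * C * M ^ α)) ^ (1 / (m - α - 1)))
    (u : ℝ → ℝ) (hu : ∀ x, 0 ≤ u x) (hint : Integrable u)
    (hLm : Integrable (fun x => u x ^ (m + 1)))
    (hdiff : Differentiable ℝ u) (hL2 : Integrable (fun x => (deriv u x) ^ 2))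
    (hmass : ∫ x, u x = M)
    (hNagy : ((∫ x, u x ^ (m + 1)) ^ (1 / (m + 1))) ^ (α + 2)
        ≤ C * M ^ α * ∫ x, (deriv u x) ^ 2) :
    (1 / 2) * (∫ x, (deriv u x) ^ 2) - (1 / (m + 1)) * (∫ x, u x ^ (m + 1))
      ≥ ((m - 3) / (3 * (m + 1))) * Ps ^ (m + 1) ∧
    ((m - 3) / (3 * (m + 1))) * Ps ^ (m + 1) < 0 := by
  have hm1 : (0:ℝ) < m + 1 := by linarith
  have hα0 : 0 < α := by rw [hα]; positivity
  have hpq : m + 1 < α + 2 := by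
    rw [hα, ← sub_pos]
    have : (m + 3) / m + 2 - (m + 1) = (m + 1) * (3 - m) / m := by field_simp; ring
    rw [this]
    exact div_pos (mul_pos hm1 (by linarith)) hm0
  have hq0 : (0:ℝ) < α + 2 := by linarith
  have hMα : 0 < M ^ α := Real.rpow_pos_of_pos hM α
  have hCM : (0:ℝ) < 2 * C * M ^ α := by positivity
  have hbase : (0:ℝ) < (α + 2) / (2 * C * M ^ α) := by positivity
  have hPs0 : 0 < Ps := hPs ▸ Real.rpow_pos_of_pos hbase _
  have hexp : m - α - 1 ≠ 0 := by
    have key : m - α - 1 = (m - 3) * (m + 1) / m := by rw [hα]; field_simp; ring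
    rw [key]
    have : (m - 3) * (m + 1) / m < 0 :=
      div_neg_of_neg_of_pos (mul_neg_of_neg_of_pos (by linarith) hm1) hm0
    exact this.ne
  have hps_pow : Ps ^ (m - α - 1) = (α + 2) / (2 * C * M ^ α) := by
    rw [hPs, ← Real.rpow_mul hbase.le, one_div, inv_mul_cancel₀ hexp, Real.rpow_one]
  have hIp0 : 0 ≤ ∫ x, u x ^ (m + 1) :=
    integral_nonneg fun x => Real.rpow_nonneg (hu x) _
  have hI20 : 0 ≤ ∫ x, (deriv u x) ^ 2 := integral_nonneg fun x => sq_nonneg _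
  set Ip := ∫ x, u x ^ (m + 1) with hIpdef
  set I2 := ∫ x, (deriv u x) ^ 2 with hI2def
  set P := Ip ^ (1 / (m + 1)) with hPdef
  have hP0 : 0 ≤ P := Real.rpow_nonneg hIp0 _
  have hPp : P ^ (m + 1) = Ip := by
    rw [hPdef, ← Real.rpow_mul hIp0, one_div, inv_mul_cancel₀ hm1.ne', Real.rpow_one]
  have hT0 : 0 < Ps ^ (m + 1) := Real.rpow_pos_of_pos hPs0 _
  -- Young inequality applied to t = P / Ps, multiplied by Ps^(m+1)
  have hy := young_aux hm1 hpq (div_nonneg hP0 hPs0.le)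
  have e1 : Ps ^ (m + 1) * (P / Ps) ^ (m + 1) = Ip := by
    rw [Real.div_rpow hP0 hPs0.le, hPp, mul_div_cancel₀ _ hT0.ne']
  have e2 : Ps ^ (m + 1) * (P / Ps) ^ (α + 2) = P ^ (α + 2) * Ps ^ (m - α - 1) := by
    rw [Real.div_rpow hP0 hPs0.le,
      show m - α - 1 = (m + 1) - (α + 2) by ring, Real.rpow_sub hPs0]
    field_simp
  have h2 : Ip / (m + 1) ≤ P ^ (α + 2) * Ps ^ (m - α - 1) / (α + 2)
      + Ps ^ (m + 1) * (1 / (m + 1) - 1 / (α + 2)) := by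
    have hmul := mul_le_mul_of_nonneg_left hy hT0.le
    have lhs_eq : Ps ^ (m + 1) * ((P / Ps) ^ (m + 1) / (m + 1)) = Ip / (m + 1) := by
      rw [← mul_div_assoc, e1]
    have rhs_eq : Ps ^ (m + 1) * ((P / Ps) ^ (α + 2) / (α + 2) + (1 / (m + 1) - 1 / (α + 2)))
        = P ^ (α + 2) * Ps ^ (m - α - 1) / (α + 2)
          + Ps ^ (m + 1) * (1 / (m + 1) - 1 / (α + 2)) := by
      rw [mul_add, ← mul_div_assoc, e2]
    rw [lhs_eq, rhs_eq] at hmul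
    exact hmul
  -- lower bound on the gradient term
  have h1 : P ^ (α + 2) * Ps ^ (m - α - 1) / (α + 2) ≤ I2 / 2 := by
    have heq : P ^ (α + 2) * Ps ^ (m - α - 1) / (α + 2) = P ^ (α + 2) / (2 * C * M ^ α) := by
      rw [hps_pow]; field_simp
    rw [heq, div_le_div_iff₀ hCM two_pos]
    have hN : P ^ (α + 2) ≤ C * M ^ α * I2 := hNagy
    nlinarith [hN]
  have h3 : ((m - 3) / (3 * (m + 1))) * Ps ^ (m + 1)
      = Ps ^ (m + 1) / (α + 2) - Ps ^ (m + 1) / (m + 1) := by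
    rw [hα]
    field_simp
    ring
  constructor
  · have : ((m - 3) / (3 * (m + 1))) * Ps ^ (m + 1)
        = - (Ps ^ (m + 1) * (1 / (m + 1) - 1 / (α + 2))) := by
      rw [h3]; ring
    rw [ge_iff_le, this]
    have hF : 1 / 2 * I2 - 1 / (m + 1) * Ip
        ≥ - (Ps ^ (m + 1) * (1 / (m + 1) - 1 / (α + 2))) := by
      have : (1:ℝ) / (m + 1) * Ip = Ip / (m + 1) := by ring
      rw [ge_iff_le]
      linarith [h1, h2]
    exact hF
  · have hneg : (m - 3) / (3 * (m + 1)) < 0 :=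
      div_neg_of_neg_of_pos (by linarith) (by linarith)
    exact mul_neg_of_neg_of_pos hneg hT0
end

section
/- Let $m>3$, $\alpha=\frac{m+3}{m}$, $C>0$, $M>0$, define $g(x)=\frac{x^{\alpha+2}}{2CM^{\alpha}}-\frac{x^{m+1}}{m+1}$ and $x_*=\Big(\frac{\alpha+2}{2CM^{\alpha}}\Big)^{1/(m-\alpha-1)}$, and let $\delta\in(0,1)$. Suppose $h:[0,\infty)\to[0,\infty)$ is continuous, $h(0)>x_*$, and $g(h(t))\le \delta\,g(x_*)$ for all $t\ge 0$. Then there exists $\mu_2>1$ such that $h(t)\ge \mu_2\,x_*$ for all $t\ge 0$. -/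
/-- Trapping above the threshold: for `m > 3`, if a continuous function
`h : [0,∞) → [0,∞)` starts above `x_*` and satisfies `g(h(t)) ≤ δ g(x_*)` for all
`t ≥ 0` with `δ ∈ (0,1)`, where `g(x) = x^{α+2}/(2CM^α) - x^{m+1}/(m+1)` and
`x_* = ((α+2)/(2CM^α))^{1/(m-α-1)}`, then there exists `μ₂ > 1` with
`h(t) ≥ μ₂ x_*` for all `t ≥ 0`. -/
theorem trapped_above_threshold (m : ℝ) (hm : 3 < m) (C M α xs δ : ℝ)
    (hC : 0 < C) (hM : 0 < M) (hα : α = (m + 3) / m) (g : ℝ → ℝ)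
    (hg : ∀ x : ℝ, g x = x ^ (α + 2) / (2 * C * M ^ α) - x ^ (m + 1) / (m + 1))
    (hxs : xs = ((α + 2) / (2 * C * M ^ α)) ^ (1 / (m - α - 1)))
    (hδ : δ ∈ Set.Ioo (0 : ℝ) 1)
    (h : ℝ → ℝ) (hcont : ContinuousOn h (Set.Ici 0))
    (hnn : ∀ t : ℝ, 0 ≤ t → 0 ≤ h t)
    (h0 : xs < h 0)
    (hbound : ∀ t : ℝ, 0 ≤ t → g (h t) ≤ δ * g xs) :
    ∃ μ2 : ℝ, 1 < μ2 ∧ ∀ t : ℝ, 0 ≤ t → μ2 * xs ≤ h t := by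
  obtain ⟨hδ0, hδ1⟩ := hδ
  have hm0 : (0:ℝ) < m := by linarith
  set p : ℝ := α + 2 with hp_def
  set q : ℝ := m + 1 with hq_def
  have hMα : (0:ℝ) < M ^ α := Real.rpow_pos_of_pos hM α
  set A : ℝ := 1 / (2 * C * M ^ α) with hA_def
  have hA : 0 < A := by positivity
  have hα1 : 1 < α := by rw [hα, lt_div_iff₀ hm0]; linarith
  have hαm : α < m - 1 := by rw [hα, div_lt_iff₀ hm0]; nlinarith
  have hp1 : (1:ℝ) < p := by simp only [hp_def]; linarith
  have hp0 : (0:ℝ) < p := by linarith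
  have hq0 : (0:ℝ) < q := by simp only [hq_def]; linarith
  have hpq : p < q := by simp only [hp_def, hq_def]; linarith
  have hqp0 : (0:ℝ) < q - p := by linarith
  -- rewrite g
  have hg' : ∀ x : ℝ, g x = A * x ^ p - x ^ q / q := by
    intro x
    rw [hg x]
    simp only [hp_def, hq_def, hA_def]
    ring
  -- xs facts
  have hxs' : xs = (p * A) ^ (q - p)⁻¹ := by
    rw [hxs]
    congr 1
    · rw [hA_def]; field_simp
    · rw [one_div]; congr 1; simp only [hp_def, hq_def]; ring
  have hxs_pos : 0 < xs := by
    rw [hxs']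
    exact Real.rpow_pos_of_pos (by positivity) _
  have hxs_pow : xs ^ (q - p) = p * A := by
    rw [hxs']
    exact Real.rpow_inv_rpow (by positivity) hqp0.ne'
  -- continuity of g
  have hcontg : Continuous g := by
    have h1 : Continuous fun x : ℝ => x ^ p := by
      rw [continuous_iff_continuousAt]
      intro x
      exact Real.continuousAt_rpow_const x p (Or.inr hp0.le)
    have h2 : Continuous fun x : ℝ => x ^ q := by
      rw [continuous_iff_continuousAt]
      intro x
      exact Real.continuousAt_rpow_const x q (Or.inr hq0.le)
    have : Continuous fun x : ℝ => A * x ^ p - x ^ q / q :=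
      ((continuous_const.mul h1).sub (h2.div_const q))
    exact this.congr fun x => (hg' x).symm
  -- derivative of g
  have hderiv : ∀ x : ℝ, 0 < x →
      HasDerivAt g (x ^ (p - 1) * (p * A - x ^ (q - p))) x := by
    intro x hx
    have d1 : HasDerivAt (fun y : ℝ => y ^ p) (p * x ^ (p - 1)) x :=
      Real.hasDerivAt_rpow_const (Or.inl hx.ne')
    have d2 : HasDerivAt (fun y : ℝ => y ^ q) (q * x ^ (q - 1)) x :=
      Real.hasDerivAt_rpow_const (Or.inl hx.ne')
    have d : HasDerivAt (fun y : ℝ => A * y ^ p - y ^ q / q)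
        (A * (p * x ^ (p - 1)) - q * x ^ (q - 1) / q) x :=
      (d1.const_mul A).sub (d2.div_const q)
    have hEq : A * (p * x ^ (p - 1)) - q * x ^ (q - 1) / q
        = x ^ (p - 1) * (p * A - x ^ (q - p)) := by
      have hxq : x ^ (q - 1) = x ^ (p - 1) * x ^ (q - p) := by
        rw [← Real.rpow_add hx]; congr 1; ring
      rw [mul_div_cancel_left₀ (x ^ (q - 1)) hq0.ne', hxq]
      ring
    rw [hEq] at d
    exact d.congr_of_eventuallyEq (Filter.Eventually.of_forall fun y => hg' y)
  -- strict monotonicity on [0, xs]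
  have hmono : StrictMonoOn g (Set.Icc 0 xs) := by
    apply strictMonoOn_of_deriv_pos (convex_Icc 0 xs) (hcontg.continuousOn)
    intro x hx
    rw [interior_Icc] at hx
    have hx0 : 0 < x := hx.1
    rw [(hderiv x hx0).deriv]
    have hlt : x ^ (q - p) < p * A := by
      rw [← hxs_pow]
      exact Real.rpow_lt_rpow hx0.le hx.2 hqp0
    have : 0 < x ^ (p - 1) := Real.rpow_pos_of_pos hx0 _
    nlinarith
  -- strict antitonicity on [xs, ∞)
  have hanti : StrictAntiOn g (Set.Ici xs) := by
    apply strictAntiOn_of_deriv_neg (convex_Ici xs) (hcontg.continuousOn)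
    intro x hx
    rw [interior_Ici] at hx
    have hx0 : 0 < x := hxs_pos.trans hx
    rw [(hderiv x hx0).deriv]
    have hlt : p * A < x ^ (q - p) := by
      rw [← hxs_pow]
      exact Real.rpow_lt_rpow hxs_pos.le hx hqp0
    have : 0 < x ^ (p - 1) := Real.rpow_pos_of_pos hx0 _
    nlinarith
  -- value at xs
  have hxsq : xs ^ q = xs ^ p * (p * A) := by
    rw [← hxs_pow, ← Real.rpow_add hxs_pos]; congr 1; ring
  have hgxs_pos : 0 < g xs := by
    rw [hg' xs, hxsq]
    have hxsp : 0 < xs ^ p := Real.rpow_pos_of_pos hxs_pos _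
    rw [sub_pos, div_lt_iff₀ hq0]
    nlinarith [mul_pos hA hxsp]
  obtain ⟨c, hc_def⟩ : ∃ c : ℝ, c = δ * g xs := ⟨_, rfl⟩
  have hc0 : 0 < c := by rw [hc_def]; exact mul_pos hδ0 hgxs_pos
  have hc_lt : c < g xs := by
    rw [hc_def]
    have := mul_lt_mul_of_pos_right hδ1 hgxs_pos
    linarith
  -- g 0 = 0
  have hg0 : g 0 = 0 := by
    rw [hg' 0, Real.zero_rpow hp0.ne', Real.zero_rpow hq0.ne']
    simp
  -- point X beyond xs where g X = 0
  set X : ℝ := (q * A) ^ (q - p)⁻¹ with hX_def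
  have hX_pos : 0 < X := Real.rpow_pos_of_pos (by positivity) _
  have hX_pow : X ^ (q - p) = q * A := Real.rpow_inv_rpow (by positivity) hqp0.ne'
  have hxsX : xs < X := by
    by_contra hle
    push_neg at hle
    have := Real.rpow_le_rpow hX_pos.le hle hqp0.le
    rw [hX_pow, hxs_pow] at this
    nlinarith
  have hgX : g X = 0 := by
    rw [hg' X]
    have hXq : X ^ q = X ^ p * (q * A) := by
      rw [← hX_pow, ← Real.rpow_add hX_pos]; congr 1; ring
    rw [hXq]
    field_simp
    ring
  -- find b ∈ (xs, X] with g b = c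
  obtain ⟨b, hbmem, hgb⟩ : ∃ b ∈ Set.Icc xs X, g b = c := by
    have := intermediate_value_Icc' hxsX.le (hcontg.continuousOn (s := Set.Icc xs X))
    have hcmem : c ∈ Set.Icc (g X) (g xs) := ⟨by rw [hgX]; exact hc0.le, hc_lt.le⟩
    obtain ⟨b, hb1, hb2⟩ := this hcmem
    exact ⟨b, hb1, hb2⟩
  have hxsb : xs < b := by
    rcases lt_or_eq_of_le hbmem.1 with h' | h'
    · exact h'
    · exfalso; rw [← h'] at hgb; rw [hgb] at hc_lt; exact lt_irrefl _ hc_lt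
  -- find a ∈ [0, xs) with g a = c
  obtain ⟨a, hamem, hga⟩ : ∃ a ∈ Set.Icc 0 xs, g a = c := by
    have := intermediate_value_Icc hxs_pos.le (hcontg.continuousOn (s := Set.Icc 0 xs))
    have hcmem : c ∈ Set.Icc (g 0) (g xs) := ⟨by rw [hg0]; exact hc0.le, hc_lt.le⟩
    obtain ⟨a, ha1, ha2⟩ := this hcmem
    exact ⟨a, ha1, ha2⟩
  have haxs : a < xs := by
    rcases lt_or_eq_of_le hamem.2 with h' | h'
    · exact h'
    · exfalso; rw [h'] at hga; rw [hga] at hc_lt; exact lt_irrefl _ hc_lt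
  have hab : a < b := haxs.trans hxsb
  -- g > c on (a, b)
  have hkey : ∀ x ∈ Set.Ioo a b, c < g x := by
    intro x hx
    rcases le_or_gt x xs with hle | hlt
    · have := hmono ⟨hamem.1, hamem.2⟩ ⟨(hamem.1.trans hx.1.le), hle⟩ hx.1
      rw [hga] at this; exact this
    · have := hanti hlt.le (le_of_lt hxsb) hx.2
      rw [hgb] at this; exact this
  -- h 0 ≥ b
  have hh0 : b ≤ h 0 := by
    by_contra hlt
    push_neg at hlt
    have hmem : h 0 ∈ Set.Ioo a b := ⟨haxs.trans h0, hlt⟩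
    have := hkey _ hmem
    have hb := hbound 0 le_rfl
    rw [← hc_def] at hb
    linarith
  -- no crossing: for all t ≥ 0, b ≤ h t
  refine ⟨b / xs, (one_lt_div hxs_pos).mpr hxsb, ?_⟩
  intro t ht
  rw [div_mul_cancel₀ _ hxs_pos.ne']
  by_contra hlt
  push_neg at hlt
  -- h t ∉ (a, b), so h t ≤ a
  have hta : h t ≤ a := by
    by_contra h'
    push_neg at h'
    have := hkey _ ⟨h', hlt⟩
    have hb := hbound t ht
    rw [← hc_def] at hb
    linarith
  -- IVT on [0, t] for h hits (a+b)/2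
  have hmid : (a + b) / 2 ∈ Set.Icc (h t) (h 0) :=
    ⟨by linarith, by linarith⟩
  have hsub : Set.Icc (0:ℝ) t ⊆ Set.Ici 0 := fun x hx => hx.1
  obtain ⟨s, hs, hhs⟩ := intermediate_value_Icc' ht (hcont.mono hsub) hmid
  have hsmem : h s ∈ Set.Ioo a b := by
    rw [hhs]; constructor <;> linarith
  have := hkey _ hsmem
  have hb := hbound s hs.1
  rw [← hc_def] at hb
  linarith
end
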